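/- arXiv:2305.11748 — 2 statements merged into one kernel-verified Lean document; each statement's English description precedes it below -/
import Mathlib

section
/- Suppose $G$ is a copy of $C_{n,k}$ ($n \ge 3$, $k \ge 2$, between $2$ and $k$ leaves per center) whose blue set contains all center (cycle) vertices. Then Blue can complete the $\operatorname{Z}_q$-forcing game spending at most $k - q + q(k-1)$ additional tokens, i.e., $\operatorname{Z}_q(C_{n,k}, B) \le k - q + q(k-1)$ whenever $B$ contains all centers. -/
open SimpleGraph

namespace ZqGame

variable {V : Type*}

/-- A blue vertex `v` forces the white vertex `w`, where only white vertices in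
`Wallow` are taken into account (used for Rule 3, where play is restricted to the
subgraph induced by the blue set together with the returned white components). -/
def ForceIn (G : SimpleGraph V) (B : Set V) (Wallow : Set V) (v w : V) : Prop :=
  v ∈ B ∧ w ∉ B ∧ w ∈ Wallow ∧ G.Adj v w ∧
    ∀ u, G.Adj v u → u ∉ B → u ∈ Wallow → u = w

/-- The standard color change rule: `v` is blue and `w` is its unique white neighbor. -/
def Force (G : SimpleGraph V) (B : Set V) (v w : V) : Prop :=
  ForceIn G B Set.univ v w

/-- The white connected component of `G - B` containing the white vertex `w`. -/
def WhiteComp (G : SimpleGraph V) (B : Set V) (w : V) : Set V :=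
  {x | Relation.ReflTransGen (fun a b => G.Adj a b ∧ a ∉ B ∧ b ∉ B) w x}

/-- `W` is a white component, i.e. a connected component of `G - B`. -/
def IsWhiteComp (G : SimpleGraph V) (B : Set V) (W : Set V) : Prop :=
  ∃ w, w ∉ B ∧ W = WhiteComp G B w

/-- An active vertex: a blue vertex with at least two white neighbors. -/
def Active (G : SimpleGraph V) (B : Set V) (a : V) : Prop :=
  a ∈ B ∧ ∃ w₁ w₂, w₁ ≠ w₂ ∧ G.Adj a w₁ ∧ G.Adj a w₂ ∧ w₁ ∉ B ∧ w₂ ∉ B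

end ZqGame

namespace ZqGame

variable {V : Type*}

/-- `Win G q B t` : in the `Z_q`-forcing game on `G` starting from blue set `B`,
Blue has a strategy spending at most `t` tokens that colors every vertex blue
against any (adversarial) play by White.
* `all` : every vertex is already blue.
* `rule1` : spend one token to color an arbitrary vertex blue.
* `rule2` : a blue vertex with exactly one white neighbor forces it, for free.
* `rule3` : Blue announces a collection `𝒲` of at least `q + 1` white components;
  for every nonempty sub-collection `𝒮` that White may return, Blue can perform a
  Rule 2 force (`vf 𝒮 → wf 𝒮`) on the subgraph induced by `B` together with `⋃ 𝒮`,
  and continue from the resulting position. -/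
inductive Win (G : SimpleGraph V) (q : ℕ) : Set V → ℕ → Prop
  | all (B : Set V) (t : ℕ) : (∀ v, v ∈ B) → Win G q B t
  | rule1 (B : Set V) (t : ℕ) (v : V) : Win G q (insert v B) t → Win G q B (t + 1)
  | rule2 (B : Set V) (t : ℕ) (v w : V) :
      Force G B v w → Win G q (insert w B) t → Win G q B t
  | rule3 (B : Set V) (t : ℕ) (𝒲 : Finset (Set V))
      (vf wf : Finset (Set V) → V) :
      (∀ W ∈ 𝒲, IsWhiteComp G B W) → q + 1 ≤ 𝒲.card →
      (∀ 𝒮 : Finset (Set V), 𝒮 ⊆ 𝒲 → 𝒮.Nonempty →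
        ForceIn G B (⋃₀ (𝒮 : Set (Set V))) (vf 𝒮) (wf 𝒮)) →
      (∀ 𝒮 : Finset (Set V), 𝒮 ⊆ 𝒲 → 𝒮.Nonempty →
        Win G q (insert (wf 𝒮) B) t) →
      Win G q B t

/-- `Z_q(G, B)` : the minimum number of additional tokens Blue must spend to win the
`Z_q`-forcing game on `G` starting from blue set `B`. -/
noncomputable def cost (G : SimpleGraph V) (q : ℕ) (B : Set V) : ℕ :=
  sInf {t | Win G q B t}

/-- `Z_q(G)` : the `Z_q`-forcing number of `G`. -/
noncomputable def Zq (G : SimpleGraph V) (q : ℕ) : ℕ := cost G q ∅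

end ZqGame

namespace ZqGame

/-- Vertex type of a caterpillar cycle: `Sum.inl i` is the `i`-th center (cycle) vertex,
and `Sum.inr ⟨i, j⟩` is the `j`-th pendant leaf attached to center `i`, where center `i`
has `f i` pendant leaves. -/
abbrev CatVert (n : ℕ) (f : Fin n → ℕ) : Type := Fin n ⊕ (Σ i : Fin n, Fin (f i))

/-- The caterpillar cycle obtained from the cycle `C_n` by attaching `f i` pendant
leaves to the `i`-th cycle vertex. -/
def catCycle (n : ℕ) (f : Fin n → ℕ) : SimpleGraph (CatVert n f) :=
  SimpleGraph.fromRel (fun x y =>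
    match x, y with
    | Sum.inl i, Sum.inl j => ((i : ℕ) + 1) % n = (j : ℕ)
    | Sum.inl i, Sum.inr l => i = l.1
    | _, _ => False)

end ZqGame

/-!
Once every centre is blue, the cycle edges join blue vertices only and play no role: the
position is a forest of stars with blue centres and white leaves. A star with `m` white leaves
is cleared greedily with `m - 1` tokens (colour all leaves but one, force the last). While at
least `q + 1` stars still have white leaves, Rule 3 on one leaf of each of them is free, since
every returned leaf is the only returned vertex its centre sees, so the centre forces it. Once at
most `q` stars are left, each with at most `k` leaves, the greedy strategy spends at most
`q (k - 1)` tokens.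
-/

namespace ZqGame

open Finset

variable {V : Type*} {G : SimpleGraph V} {q : ℕ}

lemma Win.mono {B : Set V} {t t' : ℕ} (h : Win G q B t) (htt' : t ≤ t') : Win G q B t' := by
  induction h generalizing t' with
  | all B t h => exact .all B t' h
  | rule1 B t v _ ih =>
    obtain ⟨t', rfl⟩ : ∃ s, t' = s + 1 := ⟨t' - 1, by omega⟩
    exact .rule1 B t' v (ih (by omega))
  | rule2 B t v w hf _ ih => exact .rule2 B t' v w hf (ih htt')
  | rule3 B t 𝒲 vf wf h𝒲 hcard hforce _ ih =>
    exact .rule3 B t' 𝒲 vf wf h𝒲 hcard hforce fun 𝒮 h𝒮 hne => ih 𝒮 h𝒮 hne htt'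

lemma whiteComp_eq_singleton {B : Set V} {w : V} (h : ∀ u, G.Adj w u → u ∈ B) :
    WhiteComp G B w = {w} := by
  ext x
  refine ⟨fun hx => ?_, fun hx => hx ▸ Relation.ReflTransGen.refl⟩
  rcases Relation.ReflTransGen.cases_head hx with rfl | ⟨u, ⟨hwu, -, hu⟩, -⟩
  · rfl
  · exact absurd (h u hwu) hu

lemma Win.of_privateLeaves {B : Set V} {t : ℕ} (C : Finset V) (hC : q + 1 ≤ #C)
    (leaf : V → V) (hblue : ∀ v ∈ C, v ∈ B) (hwhite : ∀ v ∈ C, leaf v ∉ B)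
    (hadj : ∀ v ∈ C, G.Adj v (leaf v)) (hisol : ∀ v ∈ C, ∀ u, G.Adj (leaf v) u → u ∈ B)
    (hpriv : ∀ v ∈ C, ∀ v' ∈ C, G.Adj v (leaf v') → v' = v)
    (hwin : ∀ v ∈ C, Win G q (insert (leaf v) B) t) : Win G q B t := by
  classical
  set 𝒲 := C.image fun v => ({leaf v} : Set V)
  obtain ⟨v₀, hv₀⟩ : C.Nonempty := card_pos.mp (by omega)
  have hpick : ∀ 𝒮 : Finset (Set V), ∃ v ∈ C, 𝒮 ⊆ 𝒲 → 𝒮.Nonempty → {leaf v} ∈ 𝒮 := by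
    intro 𝒮
    by_cases h : 𝒮 ⊆ 𝒲 ∧ 𝒮.Nonempty
    · obtain ⟨W, hW⟩ := h.2
      obtain ⟨v, hv, rfl⟩ := mem_image.mp (h.1 hW)
      exact ⟨v, hv, fun _ _ => hW⟩
    · exact ⟨v₀, hv₀, fun h₁ h₂ => absurd ⟨h₁, h₂⟩ h⟩
  choose pick hpickC hpick𝒮 using hpick
  refine .rule3 B t 𝒲 pick (fun 𝒮 => leaf (pick 𝒮)) ?_ ?_ ?_ ?_
  · intro W hW
    obtain ⟨v, hv, rfl⟩ := mem_image.mp hW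
    exact ⟨leaf v, hwhite v hv, (whiteComp_eq_singleton (hisol v hv)).symm⟩
  · refine hC.trans_eq (card_image_of_injOn fun v hv v' hv' heq => ?_).symm
    have heq : leaf v = leaf v' := Set.singleton_injective heq
    exact (hpriv v hv v' hv' (heq ▸ hadj v hv)).symm
  · intro 𝒮 h𝒮 hne
    have hv := hpickC 𝒮
    refine ⟨hblue _ hv, hwhite _ hv, Set.mem_sUnion.mpr ⟨_, hpick𝒮 𝒮 h𝒮 hne, rfl⟩,
      hadj _ hv, fun u hu _ hu𝒮 => ?_⟩
    obtain ⟨W, hW, huW⟩ := Set.mem_sUnion.mp hu𝒮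
    obtain ⟨v', hv', rfl⟩ := mem_image.mp (h𝒮 hW)
    obtain rfl := Set.mem_singleton_iff.mp huW
    rw [hpriv _ hv _ hv' hu]
  · exact fun 𝒮 _ _ => hwin _ (hpickC 𝒮)

def PendantWhite (G : SimpleGraph V) (B : Set V) : Prop :=
  ∀ w ∉ B, ∃ u ∈ B, ∀ x, G.Adj w x ↔ x = u

lemma PendantWhite.mono {B C : Set V} (h : PendantWhite G B) (hBC : B ⊆ C) :
    PendantWhite G C := fun w hw =>
  (h w fun hwB => hw (hBC hwB)).imp fun _ hu => ⟨hBC hu.1, hu.2⟩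

section Finite

variable [Fintype V]

open Classical in
noncomputable def whiteNbrs (G : SimpleGraph V) (B : Set V) (v : V) : Finset V :=
  univ.filter fun w => G.Adj v w ∧ w ∉ B

noncomputable def whiteExcess (G : SimpleGraph V) (B : Set V) : ℕ :=
  ∑ v, (#(whiteNbrs G B v) - 1)

variable {B : Set V}

@[simp]
lemma mem_whiteNbrs {v w : V} : w ∈ whiteNbrs G B v ↔ G.Adj v w ∧ w ∉ B := by
  classical simp [whiteNbrs]

lemma whiteNbrs_insert [DecidableEq V] (w v : V) :
    whiteNbrs G (insert w B) v = (whiteNbrs G B v).erase w := by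
  ext x
  simp only [mem_whiteNbrs, Set.mem_insert_iff, mem_erase]
  tauto

lemma whiteNbrs_insert_subset (w v : V) : whiteNbrs G (insert w B) v ⊆ whiteNbrs G B v := by
  classical
  exact whiteNbrs_insert w v ▸ erase_subset w _

lemma whiteExcess_insert_le (w : V) : whiteExcess G (insert w B) ≤ whiteExcess G B :=
  sum_le_sum fun v _ => Nat.sub_le_sub_right (card_le_card (whiteNbrs_insert_subset w v)) 1

lemma whiteExcess_insert_lt {v w : V} (hw : w ∈ whiteNbrs G B v)
    (h2 : 2 ≤ #(whiteNbrs G B v)) : whiteExcess G (insert w B) < whiteExcess G B := by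
  classical
  refine sum_lt_sum (fun u _ => ?_) ⟨v, mem_univ v, ?_⟩
  · exact Nat.sub_le_sub_right (card_le_card (whiteNbrs_insert_subset w u)) 1
  · rw [whiteNbrs_insert, card_erase_of_mem hw]
    omega

lemma force_of_whiteNbrs_eq_singleton {v w : V} (hv : v ∈ B) (h : whiteNbrs G B v = {w}) :
    Force G B v w := by
  have hw : w ∈ whiteNbrs G B v := h ▸ mem_singleton_self w
  rw [mem_whiteNbrs] at hw
  refine ⟨hv, hw.2, Set.mem_univ w, hw.1, fun u hu huB _ => ?_⟩
  exact mem_singleton.mp (h ▸ mem_whiteNbrs.mpr ⟨hu, huB⟩)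

lemma PendantWhite.win_whiteExcess (h : PendantWhite G B) : Win G q B (whiteExcess G B) := by
  induction B using WellFoundedGT.induction with
  | _ B ih =>
  by_cases hall : ∀ v, v ∈ B
  · exact .all B _ hall
  push Not at hall
  obtain ⟨w, hw⟩ := hall
  obtain ⟨u, hu, hwu⟩ := h w hw
  have hwn : w ∈ whiteNbrs G B u := mem_whiteNbrs.mpr ⟨((hwu u).mpr rfl).symm, hw⟩
  have ih' := ih _ (Set.ssubset_insert hw) (h.mono (Set.subset_insert w B))
  by_cases h1 : #(whiteNbrs G B u) = 1
  · obtain ⟨x, hx⟩ := card_eq_one.mp h1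
    obtain rfl : w = x := mem_singleton.mp (hx ▸ hwn)
    have hforce := force_of_whiteNbrs_eq_singleton hu hx
    exact .rule2 B _ u w hforce (ih'.mono (whiteExcess_insert_le w))
  · have hlt := whiteExcess_insert_lt hwn (by have := card_pos.mpr ⟨w, hwn⟩; omega)
    obtain ⟨t, ht⟩ := Nat.exists_eq_add_of_lt hlt
    exact ht ▸ .rule1 B _ w (ih'.mono (by omega))

lemma whiteExcess_le_card_mul {k : ℕ} (hk : ∀ v, #(whiteNbrs G B v) ≤ k) :
    whiteExcess G B ≤ #(univ.filter fun v => (whiteNbrs G B v).Nonempty) * (k - 1) := by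
  classical
  calc whiteExcess G B
      = ∑ v ∈ univ.filter fun v => (whiteNbrs G B v).Nonempty, (#(whiteNbrs G B v) - 1) := by
        refine (sum_filter_of_ne fun v _ hv => ?_).symm
        exact card_pos.mp (by omega)
    _ ≤ _ := sum_le_card_nsmul _ _ _ fun v _ => Nat.sub_le_sub_right (hk v) 1

lemma PendantWhite.win_mul_sub_one {k : ℕ} (h : PendantWhite G B) (hk : ∀ v, #(whiteNbrs G B v) ≤ k) :
    Win G q B (q * (k - 1)) := by
  classical
  induction B using WellFoundedGT.induction with
  | _ B ih =>
  set A := univ.filter fun v => (whiteNbrs G B v).Nonempty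
  by_cases hA : #A ≤ q
  · exact h.win_whiteExcess.mono
      ((whiteExcess_le_card_mul hk).trans (Nat.mul_le_mul_right _ hA))
  have hleaf : ∀ v, ∃ w, v ∈ A → w ∈ whiteNbrs G B v := fun v =>
    if hv : v ∈ A then ((mem_filter.mp hv).2.imp fun _ hw _ => hw) else ⟨v, fun h => absurd h hv⟩
  choose leaf hleaf using hleaf
  have hstar : ∀ v ∈ A, v ∈ B ∧ leaf v ∉ B ∧ ∀ x, G.Adj (leaf v) x ↔ x = v := by
    intro v hv
    obtain ⟨hadj, hwhite⟩ := mem_whiteNbrs.mp (hleaf v hv)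
    obtain ⟨u, hu, hnbr⟩ := h _ hwhite
    obtain rfl : v = u := (hnbr v).mp hadj.symm
    exact ⟨hu, hwhite, hnbr⟩
  refine Win.of_privateLeaves A (by omega) leaf (fun v hv => (hstar v hv).1)
    (fun v hv => (hstar v hv).2.1) (fun v hv => (((hstar v hv).2.2 v).mpr rfl).symm)
    (fun v hv u hu => ((hstar v hv).2.2 u).mp hu ▸ (hstar v hv).1)
    (fun v _ v' hv' hadj => (((hstar v' hv').2.2 v).mp hadj.symm).symm) (fun v hv => ?_)
  refine ih _ (Set.ssubset_insert (hstar v hv).2.1) (h.mono (Set.subset_insert _ B)) fun u => ?_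
  exact (card_le_card (whiteNbrs_insert_subset _ u)).trans (hk u)

end Finite

section CatCycle

variable {n : ℕ} {f : Fin n → ℕ} {B : Set (CatVert n f)}

lemma catCycle_adj_inr {i : Fin n} {a : Fin (f i)} {x : CatVert n f} :
    (catCycle n f).Adj (.inr ⟨i, a⟩) x ↔ x = .inl i := by
  rcases x with j | ⟨j, b⟩ <;> simp [catCycle, eq_comm]

lemma pendantWhite_catCycle (hB : ∀ i, .inl i ∈ B) : PendantWhite (catCycle n f) B := by
  rintro (i | ⟨i, a⟩) hw
  · exact absurd (hB i) hw
  · exact ⟨.inl i, hB i, fun x => catCycle_adj_inr⟩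

lemma whiteNbrs_catCycle_inl_subset [DecidableEq (CatVert n f)] (hB : ∀ i, .inl i ∈ B)
    (i : Fin n) :
    whiteNbrs (catCycle n f) B (.inl i) ⊆ univ.image fun a => .inr ⟨i, a⟩ := by
  intro x hx
  obtain ⟨hadj, hx⟩ := mem_whiteNbrs.mp hx
  rcases x with j | ⟨j, b⟩
  · exact absurd (hB j) hx
  · obtain rfl : i = j := Sum.inl_injective (catCycle_adj_inr.mp hadj.symm)
    exact mem_image_of_mem _ (mem_univ b)

lemma whiteNbrs_catCycle_inr (hB : ∀ i, .inl i ∈ B) (i : Fin n) (a : Fin (f i)) :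
    whiteNbrs (catCycle n f) B (.inr ⟨i, a⟩) = ∅ :=
  eq_empty_of_forall_notMem fun x hx => by
    obtain ⟨hadj, hx⟩ := mem_whiteNbrs.mp hx
    exact hx (catCycle_adj_inr.mp hadj ▸ hB i)

lemma card_whiteNbrs_catCycle_le {k : ℕ} (hB : ∀ i, .inl i ∈ B) (hk : ∀ i, f i ≤ k)
    (v : CatVert n f) : #(whiteNbrs (catCycle n f) B v) ≤ k := by
  classical
  rcases v with i | ⟨i, a⟩
  · calc #(whiteNbrs (catCycle n f) B (.inl i))
        ≤ #(univ.image fun a : Fin (f i) => (.inr ⟨i, a⟩ : CatVert n f)) :=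
          card_le_card (whiteNbrs_catCycle_inl_subset hB i)
      _ ≤ f i := card_image_le.trans_eq (card_fin _)
      _ ≤ k := hk i
  · simp [whiteNbrs_catCycle_inr hB]

end CatCycle

end ZqGame

open SimpleGraph

theorem cost_catCycle_all_centers_blue_general (n k q : ℕ)
    (f : Fin n → ℕ) (hf : ∀ i, 2 ≤ f i ∧ f i ≤ k)
    (B : Set (ZqGame.CatVert n f)) (hB : ∀ i : Fin n, Sum.inl i ∈ B) :
    ZqGame.cost (ZqGame.catCycle n f) q B ≤ k - q + q * (k - 1) := by
  have hwin : ZqGame.Win (ZqGame.catCycle n f) q B (q * (k - 1)) :=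
    (ZqGame.pendantWhite_catCycle hB).win_mul_sub_one
      (ZqGame.card_whiteNbrs_catCycle_le hB fun i => (hf i).2)
  exact (Nat.sInf_le hwin).trans (Nat.le_add_left _ _)

/-- If all centers of a caterpillar cycle `C_{n,k}` are blue, then Blue can finish the
`Z_q`-forcing game spending at most `k - q + q * (k - 1)` additional tokens. -/
theorem cost_catCycle_all_centers_blue (n k q : ℕ) (hn : 3 ≤ n) (hk : 2 ≤ k)
    (f : Fin n → ℕ) (hf : ∀ i, 2 ≤ f i ∧ f i ≤ k)
    (B : Set (ZqGame.CatVert n f)) (hB : ∀ i : Fin n, Sum.inl i ∈ B) :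
    ZqGame.cost (ZqGame.catCycle n f) q B ≤ k - q + q * (k - 1) :=
  cost_catCycle_all_centers_blue_general n k q f hf B hB
end

section
/- In the $\operatorname{Z}_2$-forcing game on $C_{n,k}$ (with White following the protected-path strategy), if Blue spends a token to transition from game state $H_{i-1}$ to $H_i$, then $\varphi(H_i) \ge \frac{\varphi(H_{i-1}) - 1}{2}$, where $\varphi$ is the maximum number of good internal centers over all protected paths. -/
namespace ZqGame

variable {n : ℕ} [NeZero n] {f : Fin n → ℕ}

open Fin.NatCast

/-- A center is bad if it is blue or has a blue degree-one (pendant) neighbor. -/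
def IsBadCenter (B : Set (CatVert n f)) (i : Fin n) : Prop :=
  Sum.inl i ∈ B ∨ ∃ j : Fin (f i), Sum.inr ⟨i, j⟩ ∈ B

/-- Center `i` has at least one white pendant neighbor. -/
def HasWhiteLeaf (B : Set (CatVert n f)) (i : Fin n) : Prop :=
  ∃ j : Fin (f i), Sum.inr ⟨i, j⟩ ∉ B

/-- The path of centers `s, s+1, …, s+(m-1)` (indices mod `n`) is protected:
it has at least two centers, every center on it has a white pendant neighbor,
and only its two endpoints may be bad. -/
def IsProtected (B : Set (CatVert n f)) (s : Fin n) (m : ℕ) : Prop :=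
  2 ≤ m ∧ m ≤ n ∧ (∀ t : ℕ, t < m → HasWhiteLeaf B (s + (t : Fin n))) ∧
    ∀ t : ℕ, 0 < t → t + 1 < m → ¬ IsBadCenter B (s + (t : Fin n))

/-- `φ` of a game state: the maximum number `m - 2` of guaranteed good (internal)
centers over all protected paths (`0` if there is no protected path). -/
noncomputable def phi (B : Set (CatVert n f)) : ℕ :=
  sSup {d | ∃ s m, IsProtected B s m ∧ d = m - 2}

end ZqGame

/-!
Take a protected path `P` of `m` centers realizing `φ(B)` and let `c` be the center at (or
under) the new blue vertex. If `c` is not on `P`, then `P` stays protected. If `c` is an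
internal center of `P`, it was good, hence still has a white leaf (each center has at least
two), so it may serve as an endpoint: splitting `P` at `c` gives two protected paths sharing
`c`, of lengths summing to `m + 1`, and the longer one has at least `(m - 3) / 2` internal
centers. If `c` is an endpoint that keeps a white leaf, `P` stays protected; otherwise dropping
`c` leaves a protected path with `m - 3` internal centers.
-/

namespace ZqGame

variable {n : ℕ} {f : Fin n → ℕ} {B : Set (CatVert n f)} {u : CatVert n f}

open Fin.NatCast

def centerOf : CatVert n f → Fin n := Sum.elim id Sigma.fst

lemma IsBadCenter.of_insert {i : Fin n} (h : IsBadCenter (insert u B) i) :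
    IsBadCenter B i ∨ i = centerOf u := by
  rcases h with h | ⟨l, h⟩ <;> rcases Set.mem_insert_iff.1 h with h | h
  · exact Or.inr (by rw [← h]; rfl)
  · exact Or.inl (Or.inl h)
  · exact Or.inr (by rw [← h]; rfl)
  · exact Or.inl (Or.inr ⟨l, h⟩)

lemma HasWhiteLeaf.insert_of_ne {i : Fin n} (h : HasWhiteLeaf B i) (hi : i ≠ centerOf u) :
    HasWhiteLeaf (insert u B) i := by
  obtain ⟨l, hl⟩ := h
  refine ⟨l, fun hmem => ?_⟩
  rcases Set.mem_insert_iff.1 hmem with h | h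
  · exact hi (by rw [← h]; rfl)
  · exact hl h

lemma hasWhiteLeaf_insert_of_not_isBadCenter {i : Fin n} (hf : 2 ≤ f i)
    (h : ¬ IsBadCenter B i) : HasWhiteLeaf (insert u B) i := by
  have white : ∀ l, (Sum.inr ⟨i, l⟩ : CatVert n f) ∉ B := fun l hl => h (Or.inr ⟨l, hl⟩)
  by_cases h0 : (Sum.inr ⟨i, ⟨0, by omega⟩⟩ : CatVert n f) = u
  · refine ⟨⟨1, hf⟩, fun hmem => ?_⟩
    rcases Set.mem_insert_iff.1 hmem with h1 | h1
    · rw [← h0] at h1; simp at h1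
    · exact white _ h1
  · exact ⟨⟨0, by omega⟩, by simp [h0, white]⟩

variable [NeZero n]

lemma add_natCast_inj {s : Fin n} {t t' : ℕ} (ht : t < n) (ht' : t' < n)
    (h : s + (t : Fin n) = s + (t' : Fin n)) : t = t' := by
  simpa [Fin.val_natCast, Nat.mod_eq_of_lt ht, Nat.mod_eq_of_lt ht'] using
    congrArg Fin.val (add_left_cancel h)

lemma bddAbove_protectedLengths :
    BddAbove {d | ∃ s m, IsProtected B s m ∧ d = m - 2} :=
  ⟨n, by rintro d ⟨s, m, ⟨-, hmn, -⟩, rfl⟩; omega⟩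

lemma IsProtected.sub_two_le_phi {s : Fin n} {m : ℕ} (h : IsProtected B s m) :
    m - 2 ≤ phi B :=
  le_csSup bddAbove_protectedLengths ⟨s, m, h, rfl⟩

lemma exists_isProtected_phi_eq (h : 0 < phi B) :
    ∃ s m, IsProtected B s m ∧ phi B = m - 2 := by
  have hne : {d | ∃ s m, IsProtected B s m ∧ d = m - 2}.Nonempty := by
    by_contra hempty
    rw [phi, Set.not_nonempty_iff_eq_empty.1 hempty, csSup_empty] at h
    exact h.false
  exact Nat.sSup_mem hne bddAbove_protectedLengths

lemma IsProtected.window_insert {s : Fin n} {m a m' : ℕ} (hP : IsProtected B s m)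
    (hm' : 2 ≤ m') (hle : a + m' ≤ m)
    (hc : ∀ t < m', s + ((a + t : ℕ) : Fin n) = centerOf u →
      (t = 0 ∨ t + 1 = m') ∧ HasWhiteLeaf (insert u B) (centerOf u)) :
    IsProtected (insert u B) (s + (a : Fin n)) m' := by
  obtain ⟨-, hmn, hwhite, hgood⟩ := hP
  have shift : ∀ t : ℕ, s + (a : Fin n) + (t : Fin n) = s + ((a + t : ℕ) : Fin n) := by
    intro t; push_cast; abel
  refine ⟨hm', by omega, fun t ht => ?_, fun t ht0 ht1 hbad => ?_⟩
  · rw [shift]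
    by_cases hcu : s + ((a + t : ℕ) : Fin n) = centerOf u
    · rw [hcu]; exact (hc t ht hcu).2
    · exact (hwhite (a + t) (by omega)).insert_of_ne hcu
  · rw [shift] at hbad
    rcases hbad.of_insert with hbad | hcu
    · exact hgood (a + t) (by omega) (by omega) hbad
    · have := (hc t (by omega) hcu).1; omega

lemma IsProtected.exists_isProtected_insert (hf : ∀ i, 2 ≤ f i) {s : Fin n} {m : ℕ}
    (hP : IsProtected B s m) (hm : 3 ≤ m) :
    ∃ s' m', IsProtected (insert u B) s' m' ∧ m - 2 ≤ 2 * (m' - 2) + 1 := by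
  by_cases hon : ∃ t < m, s + (t : Fin n) = centerOf u
  swap
  · refine ⟨_, m, hP.window_insert (a := 0) (by omega) (by omega) ?_, by omega⟩
    exact fun t ht hcu => absurd ⟨0 + t, by omega, hcu⟩ hon
  obtain ⟨t₀, ht₀, hct₀⟩ := hon
  have hmn := hP.2.1
  have only_t₀ : ∀ t < m, s + (t : Fin n) = centerOf u → t = t₀ := fun t ht hcu =>
    add_natCast_inj (by omega) (by omega) (hcu.trans hct₀.symm)
  by_cases hw : HasWhiteLeaf (insert u B) (centerOf u)
  · by_cases hleft : m ≤ 2 * t₀ + 1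
    · refine ⟨_, t₀ + 1, hP.window_insert (a := 0) (by omega) (by omega) ?_, by omega⟩
      exact fun t ht hcu => ⟨Or.inr (by have := only_t₀ _ (by omega) hcu; omega), hw⟩
    · refine ⟨_, m - t₀, hP.window_insert (a := t₀) (by omega) (by omega) ?_, by omega⟩
      exact fun t ht hcu => ⟨Or.inl (by have := only_t₀ _ (by omega) hcu; omega), hw⟩
  · -- an internal center of `P` is good, so it would have kept a white leaf
    have hend : t₀ = 0 ∨ t₀ + 1 = m := by
      by_contra hint
      exact hw (hasWhiteLeaf_insert_of_not_isBadCenter (hf _)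
        (hct₀ ▸ hP.2.2.2 t₀ (by omega) (by omega)))
    rcases hend with rfl | rfl
    · refine ⟨_, m - 1, hP.window_insert (a := 1) (by omega) (by omega) ?_, by omega⟩
      exact fun t ht hcu => absurd (only_t₀ _ (by omega) hcu) (by omega)
    · refine ⟨_, t₀, hP.window_insert (a := 0) (by omega) (by omega) ?_, by omega⟩
      exact fun t ht hcu => absurd (only_t₀ _ (by omega) hcu) (by omega)

theorem phi_le_two_mul_phi_insert_add_one (hf : ∀ i, 2 ≤ f i) (B : Set (CatVert n f))
    (u : CatVert n f) : phi B ≤ 2 * phi (insert u B) + 1 := by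
  by_cases hsmall : phi B ≤ 1
  · omega
  obtain ⟨s, m, hP, hphi⟩ := exists_isProtected_phi_eq (B := B) (by omega)
  obtain ⟨s', m', hP', hm'⟩ := hP.exists_isProtected_insert (u := u) hf (by omega)
  have := hP'.sub_two_le_phi
  omega

end ZqGame

open SimpleGraph

theorem phi_decrease_half_general (n k : ℕ) [NeZero n]
    (f : Fin n → ℕ) (hf : ∀ i, 2 ≤ f i ∧ f i ≤ k)
    (B : Set (ZqGame.CatVert n f)) (u : ZqGame.CatVert n f) :
    ((ZqGame.phi B : ℝ) - 1) / 2 ≤ (ZqGame.phi (insert u B) : ℝ) := by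
  have key : (ZqGame.phi B : ℝ) ≤ 2 * ZqGame.phi (insert u B) + 1 := by
    exact_mod_cast ZqGame.phi_le_two_mul_phi_insert_add_one (fun i => (hf i).1) B u
  linarith

/-- In the `Z_2`-forcing game on a caterpillar cycle `C_{n,k}` (each center has between
`2` and `k` pendant leaves), if Blue spends a token, i.e. a single additional vertex
`u` is colored blue, then the potential `φ` (the maximum number of guaranteed good
centers over all protected paths) satisfies `φ(H_i) ≥ (φ(H_{i-1}) - 1) / 2`. -/
theorem phi_decrease_half (n k : ℕ) [NeZero n] (hn : 3 ≤ n) (hk : 2 ≤ k)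
    (f : Fin n → ℕ) (hf : ∀ i, 2 ≤ f i ∧ f i ≤ k)
    (B : Set (ZqGame.CatVert n f)) (u : ZqGame.CatVert n f) :
    ((ZqGame.phi B : ℝ) - 1) / 2 ≤ (ZqGame.phi (insert u B) : ℝ) :=
  phi_decrease_half_general n k f hf B u
end
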